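/- arXiv:0809.2378 — 5 statements merged into one kernel-verified Lean document; each statement's English description precedes it below -/
import Mathlib

section
/- Let v_1,...,v_k ∈ (ZMod 2)^k be nonzero vectors and define f : (ZMod 2)^k × (ZMod 2)^{n−k} → ZMod 2 by f(x,y) = 1 iff x ∈ {v_1,...,v_k}. If g : (ZMod 2)^n → ZMod 2 differs from f on fewer than a 2^{−k} fraction of inputs, then there exists a linear map L : (ZMod 2)^k → (ZMod 2)^n such that g(L(v_i)) = 1 for all i ∈ [k]. Consequently, f is 2^{−k}-far from being M-free, where M is the matroid represented by v_1,...,v_k. -/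
/-!
Look for `L` of the form `(id, B)` with `B : 𝔽₂^k → 𝔽₂^m` linear. Since every `v i` lies
in the support of `f`, `g` contains `M` at `L` unless the graph of `B` meets a point `(x, y)`,
`x ≠ 0`, where `g` and `f` disagree. For fixed `x ≠ 0` the value `B x` is uniformly distributed,
so each such point is hit by a `2^{-m}` fraction of the maps `B`, and a union bound over fewer
than `2^m` points leaves some `B` whose graph avoids them all.
-/

open Finset

def MatroidFree {k : ℕ} {D : Type*} [AddCommGroup D] [Module (ZMod 2) D]
    (v : Fin k → (Fin k → ZMod 2)) (h : D → ZMod 2) : Prop :=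
  ∀ L : (Fin k → ZMod 2) →ₗ[ZMod 2] D, ¬ (∀ i, h (L (v i)) = 1)

theorem AddMonoidHom.card_fiber_mul_card_of_surjective {G H F : Type*} [AddGroup G] [Fintype G]
    [AddMonoid H] [Fintype H] [DecidableEq H] [FunLike F G H] [AddMonoidHomClass F G H]
    (φ : F) (hφ : Function.Surjective φ) (y : H) :
    #{g | φ g = y} * Fintype.card H = Fintype.card G := by
  calc #{g | φ g = y} * Fintype.card H = ∑ z : H, #{g | φ g = z} := by
        rw [sum_congr rfl fun z _ ↦ card_fiber_eq_of_mem_range φ (hφ z) (hφ y), sum_const,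
          card_univ, smul_eq_mul, mul_comm]
    _ = Fintype.card G := (card_eq_sum_card_fiberwise fun g _ ↦ mem_univ (φ g)).symm

section

variable {K V W : Type*} [Field K] [AddCommGroup V] [Module K V] [AddCommGroup W] [Module K W]

theorem LinearMap.applyₗ_surjective {x : V} (hx : x ≠ 0) :
    Function.Surjective (LinearMap.applyₗ (R := K) (M₂ := W) x) := by
  obtain ⟨f, hf⟩ := Module.Projective.exists_dual_eq_one K hx
  exact fun y ↦ ⟨f.smulRight y, by simp [hf]⟩

theorem exists_linearMap_disjoint_graph [Finite V] [Finite W] (D : Finset (V × W))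
    (hD : ∀ p ∈ D, p.1 ≠ 0) (hcard : #D < Nat.card W) :
    ∃ B : V →ₗ[K] W, Disjoint (B.graph : Set (V × W)) D := by
  classical
  have : Finite (V →ₗ[K] W) := Finite.of_injective _ DFunLike.coe_injective
  have := Fintype.ofFinite (V →ₗ[K] W)
  have := Fintype.ofFinite W
  rw [Nat.card_eq_fintype_card] at hcard
  set bad := D.biUnion fun p ↦ ({B | B p.1 = p.2} : Finset (V →ₗ[K] W))
  suffices #bad < #(univ : Finset (V →ₗ[K] W)) by
    obtain ⟨B, -, hB⟩ := exists_mem_notMem_of_card_lt_card this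
    refine ⟨B, Set.disjoint_left.2 fun p hpB hpD ↦ hB (mem_biUnion.2 ⟨p, hpD, ?_⟩)⟩
    simpa [eq_comm] using (B.mem_graph_iff p).1 hpB
  have fiber (p) (hp : p ∈ D) :
      #{B : V →ₗ[K] W | B p.1 = p.2} * Fintype.card W = Fintype.card (V →ₗ[K] W) :=
    AddMonoidHom.card_fiber_mul_card_of_surjective _
      (LinearMap.applyₗ_surjective (K := K) (W := W) (hD p hp)) p.2
  refine Nat.lt_of_mul_lt_mul_right (a := Fintype.card W) ?_
  calc #bad * Fintype.card W ≤ (∑ p ∈ D, #{B : V →ₗ[K] W | B p.1 = p.2}) * Fintype.card W := by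
        gcongr; exact card_biUnion_le
    _ = #D * Fintype.card (V →ₗ[K] W) := by
        rw [sum_mul, sum_congr rfl fiber, sum_const, smul_eq_mul]
    _ < Fintype.card W * Fintype.card (V →ₗ[K] W) := by gcongr
    _ = _ := by rw [card_univ, mul_comm]

end

/-- The canonical function of a matroid is `2^{-k}`-far from being `M`-free:
any `g` disagreeing with it on fewer than a `2^{-k}` fraction of points
contains `M` at some linear map, and hence any `M`-free function is at
distance at least `2^{-k}` from it. -/
theorem canonical_function_far {k m : ℕ}
    (v : Fin k → (Fin k → ZMod 2)) (hv : ∀ i, v i ≠ 0)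
    (f : (Fin k → ZMod 2) × (Fin m → ZMod 2) → ZMod 2)
    (hf : ∀ p, f p = if ∃ i, p.1 = v i then 1 else 0) :
    (∀ g : (Fin k → ZMod 2) × (Fin m → ZMod 2) → ZMod 2,
      (Finset.univ.filter (fun p => g p ≠ f p)).card < 2 ^ m →
      ∃ L : (Fin k → ZMod 2) →ₗ[ZMod 2]
          ((Fin k → ZMod 2) × (Fin m → ZMod 2)),
        ∀ i, g (L (v i)) = 1) ∧
    (∀ h : (Fin k → ZMod 2) × (Fin m → ZMod 2) → ZMod 2,
      MatroidFree v h →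
      2 ^ m ≤ (Finset.univ.filter (fun p => h p ≠ f p)).card) := by
  have contains : ∀ g : (Fin k → ZMod 2) × (Fin m → ZMod 2) → ZMod 2,
      #{p | g p ≠ f p} < 2 ^ m → ∃ L : (Fin k → ZMod 2) →ₗ[ZMod 2]
        ((Fin k → ZMod 2) × (Fin m → ZMod 2)), ∀ i, g (L (v i)) = 1 := by
    intro g hg
    obtain ⟨B, hB⟩ := exists_linearMap_disjoint_graph (K := ZMod 2)
      {p | g p ≠ f p ∧ p.1 ≠ 0} (fun p hp ↦ (mem_filter.1 hp).2.2)
      ((card_le_card (monotone_filter_right _ fun _ _ ↦ And.left)).trans_lt (by simpa using hg))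
    refine ⟨LinearMap.id.prod B, fun i ↦ ?_⟩
    have hgf : g (v i, B (v i)) = f (v i, B (v i)) := by
      by_contra hne
      exact Set.disjoint_left.1 hB ((B.mem_graph_iff (v i, B (v i))).2 rfl) (by simp [hne, hv i])
    simpa [hf] using hgf
  exact ⟨contains, fun h hfree ↦ not_lt.1 fun hlt ↦ hfree _ (contains h hlt).choose_spec⟩
end

section
/- Let a ≥ 3 and b ≥ C(a,2) + 2 where C(a,2) = a(a−1)/2. Then there is no matroid homomorphism from the graphic matroid of the complete graph K_b to the graphic matroid of K_a. Concretely: there is no map φ from the edges of K_b to the edges of K_a such that for every set of edges of K_b forming a cycle (even-degree subgraph), the multiset of image edges sums to zero in the edge space of K_a (equivalently, every cycle maps to an even-degree subgraph of K_a). -/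
/-!
The `b - 1` edges at a vertex `c` of `K_b` outnumber the `C(a, 2)` edges of `K_a`, so two of
them, `cu` and `cv`, have the same image. The triangle `cu, cv, uv` is a cycle, so its image sums
to zero; the two equal images cancel over `ZMod 2`, leaving the characteristic vector of the image
of `uv` equal to zero, which no edge has.
-/

open Finset

/-- The characteristic vector in `(ZMod 2)^n` of an edge (an element of
`Sym2 (Fin n)`): the standard representation of the graphic matroid. -/
def edgeVec (n : ℕ) : Sym2 (Fin n) → (Fin n → ZMod 2) :=
  Sym2.lift ⟨fun u v w => (if w = u then (1 : ZMod 2) else 0) + (if w = v then 1 else 0),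
    by intro u v; funext w; exact add_comm _ _⟩

/-- The equal images of `x` and `y` cancel in characteristic two. -/
lemma apply_eq_zero_of_map_eq_of_sum_eq_zero {ι κ M N : Type*} [DecidableEq ι] [AddCommMonoid M]
    [AddCommGroup N] [Module (ZMod 2) N] {f : ι → M} {g : κ → N} {φ : ι → κ}
    (hφ : ∀ T : Finset ι, ∑ i ∈ T, f i = 0 → ∑ i ∈ T, g (φ i) = 0)
    {x y z : ι} (hxy : x ≠ y) (hxz : x ≠ z) (hyz : y ≠ z)
    (hsum : f x + f y + f z = 0) (hφxy : φ x = φ y) : g (φ z) = 0 := by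
  have hx : x ∉ ({y, z} : Finset ι) := by simp [hxy, hxz]
  have := hφ {x, y, z} (by rwa [sum_insert hx, sum_pair hyz, ← add_assoc])
  rwa [sum_insert hx, sum_pair hyz, hφxy, ← add_assoc, ZModModule.add_self, zero_add] at this

lemma edgeVec_mk (n : ℕ) (u v : Fin n) :
    edgeVec n s(u, v) = Pi.single u 1 + Pi.single v 1 := by
  funext w
  simp [edgeVec, Pi.single_apply]

lemma edgeVec_ne_zero {n : ℕ} {e : Sym2 (Fin n)} (he : ¬ e.IsDiag) : edgeVec n e ≠ 0 := by
  induction e using Sym2.ind with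
  | _ u v =>
    intro h
    have := congrFun h u
    simp_all [edgeVec_mk]

lemma edgeVec_triangle (n : ℕ) (u v w : Fin n) :
    edgeVec n s(u, v) + edgeVec n s(u, w) + edgeVec n s(v, w) = 0 := by
  rw [Sym2.eq_swap, edgeVec_mk, edgeVec_mk, edgeVec_mk, ZModModule.add_add_add_cancel,
    ZModModule.add_self]

def edge {V : Type*} (u v : V) (h : u ≠ v) : {e : Sym2 V // ¬ e.IsDiag} :=
  ⟨s(u, v), Sym2.mk_isDiag_iff.not.mpr h⟩

lemma exists_ne_map_edge_eq {V W : Type*} [Fintype V] [DecidableEq V] [Fintype W] [DecidableEq W]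
    (φ : {e : Sym2 V // ¬ e.IsDiag} → {e : Sym2 W // ¬ e.IsDiag}) (c : V)
    (hcard : (Fintype.card W).choose 2 < Fintype.card V - 1) :
    ∃ (u v : V) (hu : c ≠ u) (hv : c ≠ v), u ≠ v ∧ φ (edge c u hu) = φ (edge c v hv) := by
  obtain ⟨u, v, huv, heq⟩ := Fintype.exists_ne_map_eq_of_card_lt
    (fun u : {u // u ≠ c} => φ (edge c u u.2.symm))
    (by rwa [Sym2.card_subtype_not_diag, Fintype.card_subtype_compl, Fintype.card_subtype_eq])
  exact ⟨u, v, u.2.symm, v.2.symm, Subtype.coe_ne_coe.mpr huv, heq⟩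

theorem no_hom_complete_graphs_general {a b : ℕ} (hb : a * (a - 1) / 2 + 2 ≤ b) :
    ¬ ∃ φ : {e : Sym2 (Fin b) // ¬ e.IsDiag} → {e : Sym2 (Fin a) // ¬ e.IsDiag},
      ∀ T : Finset {e : Sym2 (Fin b) // ¬ e.IsDiag},
        ∑ e ∈ T, edgeVec b e.val = 0 → ∑ e ∈ T, edgeVec a (φ e).val = 0 := by
  rintro ⟨φ, hφ⟩
  obtain ⟨u, v, hu, hv, huv, hφuv⟩ := exists_ne_map_edge_eq φ (⟨0, by omega⟩ : Fin b) (by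
    rw [Fintype.card_fin, Fintype.card_fin, Nat.choose_two_right]
    omega)
  refine edgeVec_ne_zero (φ (edge u v huv)).2
    (apply_eq_zero_of_map_eq_of_sum_eq_zero (g := edgeVec a ∘ Subtype.val) hφ
      ?_ ?_ ?_ (edgeVec_triangle b _ u v) hφuv)
  all_goals simp [edge, Subtype.ext_iff, hu, hv, huv, hu.symm, huv.symm]

/-- If `a ≥ 3` and `b ≥ a(a-1)/2 + 2`, there is no matroid homomorphism from the
graphic matroid of `K_b` to the graphic matroid of `K_a`: no map of edges sends
every zero-sum (even-degree) edge set of `K_b` to a zero-sum edge set of `K_a`. -/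
theorem no_hom_complete_graphs {a b : ℕ} (ha : 3 ≤ a) (hb : a * (a - 1) / 2 + 2 ≤ b) :
    ¬ ∃ φ : {e : Sym2 (Fin b) // ¬ e.IsDiag} → {e : Sym2 (Fin a) // ¬ e.IsDiag},
      ∀ T : Finset {e : Sym2 (Fin b) // ¬ e.IsDiag},
        ∑ e ∈ T, edgeVec b e.val = 0 → ∑ e ∈ T, edgeVec a (φ e).val = 0 :=
  no_hom_complete_graphs_general hb
end

section
/- A function f : (ZMod 2)^n → ZMod 2 satisfies: for all x, y, z, w with x + y + z + w = 0, not (f(x) = 1 ∧ f(y) = 1 ∧ f(z) = 1 ∧ f(w) = 0), if and only if f is identically 0 or f⁻¹(1) is an affine subspace of (ZMod 2)^n. -/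
/-!
Over `ZMod 2` we have `x + y + z + w = 0 ↔ w = x + y + z`, so freeness says exactly that
`S = f⁻¹(1)` is closed under sums of three of its elements. Such an `S`, when nonempty, is a
coset: for `v ∈ S` the translate `{u | v + u ∈ S}` contains `0` and is closed under addition
because `v + (a + b) = (v + a) + (v + b) + v`. Conversely a coset `v + W` is closed under
triple sums since `(v + a) + (v + b) + (v + c) = v + (a + b + c)`.
-/

open ZModModule

variable {V : Type*} [AddCommGroup V] [Module (ZMod 2) V]

def IsTripleSumClosed (S : Set V) : Prop :=
  ∀ x ∈ S, ∀ y ∈ S, ∀ z ∈ S, x + y + z ∈ S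

lemma add_add_add_eq_zero_iff {x y z w : V} : x + y + z + w = 0 ↔ w = x + y + z := by
  rw [add_eq_zero_iff_neg_eq, ZModModule.neg_eq_self, eq_comm]

lemma coset_add_add (v a b c : V) : (v + a) + (v + b) + (v + c) = v + (a + b + c) := by
  rw [show (v + a) + (v + b) + (v + c) = (v + v) + (v + (a + b + c)) by abel, add_self, zero_add]

lemma zmod_two_eq_zero_iff_ne_one (a : ZMod 2) : a = 0 ↔ a ≠ 1 := by
  revert a; decide

namespace IsTripleSumClosed

variable {S : Set V}

def direction (hS : IsTripleSumClosed S) {v : V} (hv : v ∈ S) : Submodule (ZMod 2) V where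
  carrier := {u | v + u ∈ S}
  add_mem' {a b} ha hb := by
    have h := hS _ ha _ hb (v + 0) ((add_zero v).symm ▸ hv)
    rwa [coset_add_add, add_zero] at h
  zero_mem' := by simpa using hv
  smul_mem' c u hu := by
    obtain rfl | rfl : c = 0 ∨ c = 1 := by revert c; decide
    · simpa using hv
    · simpa using hu

lemma eq_coset (hS : IsTripleSumClosed S) {v : V} (hv : v ∈ S) :
    S = {x | ∃ u ∈ hS.direction hv, x = v + u} := by
  ext x
  have cancel : v + (v + x) = x := by rw [← add_assoc, add_self, zero_add]
  refine ⟨fun hx => ⟨v + x, show v + (v + x) ∈ S by rwa [cancel], cancel.symm⟩, ?_⟩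
  rintro ⟨u, hu, rfl⟩
  exact hu

end IsTripleSumClosed

lemma isTripleSumClosed_coset (v : V) (W : Submodule (ZMod 2) V) :
    IsTripleSumClosed {x | ∃ u ∈ W, x = v + u} := by
  rintro _ ⟨a, ha, rfl⟩ _ ⟨b, hb, rfl⟩ _ ⟨c, hc, rfl⟩
  exact ⟨a + b + c, W.add_mem (W.add_mem ha hb) hc, coset_add_add v a b c⟩

lemma isTripleSumClosed_iff_eq_empty_or_coset (S : Set V) :
    IsTripleSumClosed S ↔
      S = ∅ ∨ ∃ (v : V) (W : Submodule (ZMod 2) V), S = {x | ∃ u ∈ W, x = v + u} := by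
  refine ⟨fun hS => ?_, ?_⟩
  · rcases S.eq_empty_or_nonempty with hempty | ⟨v, hv⟩
    · exact .inl hempty
    · exact .inr ⟨v, hS.direction hv, hS.eq_coset hv⟩
  · rintro (rfl | ⟨v, W, rfl⟩)
    · simp [IsTripleSumClosed]
    · exact isTripleSumClosed_coset v W

lemma free_1110_iff_isTripleSumClosed (f : V → ZMod 2) :
    (∀ x y z w : V, x + y + z + w = 0 → ¬ (f x = 1 ∧ f y = 1 ∧ f z = 1 ∧ f w = 0)) ↔
      IsTripleSumClosed {x | f x = 1} := by
  simp only [add_add_add_eq_zero_iff, IsTripleSumClosed, Set.mem_ofPred_eq,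
    zmod_two_eq_zero_iff_ne_one, forall_eq, not_and, not_not]
  exact ⟨fun h x hx y hy z hz => h x y z hx hy hz, fun h x y z hx hy hz => h x hx y hy z hz⟩

/-- `(C_4, 1110)`-freeness characterization: `f` avoids the pattern `1110` on
zero-sum 4-tuples iff `f` is identically `0` or `f⁻¹(1)` is an affine subspace. -/
theorem c4_1110_free_iff {n : ℕ} (f : (Fin n → ZMod 2) → ZMod 2) :
    (∀ x y z w : Fin n → ZMod 2, x + y + z + w = 0 →
        ¬ (f x = 1 ∧ f y = 1 ∧ f z = 1 ∧ f w = 0)) ↔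
      ((∀ x, f x = 0) ∨
        ∃ (v : Fin n → ZMod 2) (W : Submodule (ZMod 2) (Fin n → ZMod 2)),
          {x | f x = 1} = {x | ∃ u ∈ W, x = v + u}) := by
  have zero_iff : (∀ x, f x = 0) ↔ {x | f x = 1} = ∅ := by
    simp [Set.eq_empty_iff_forall_notMem, zmod_two_eq_zero_iff_ne_one]
  rw [free_1110_iff_isTripleSumClosed, zero_iff]
  exact isTripleSumClosed_iff_eq_empty_or_coset _
end

section
/- A function f : (ZMod 2)^n → ZMod 2 is (C_6, 000111)-free (no zero-sum 6-tuple x_1,...,x_6 with f equal to 0 on the first three and 1 on the last three) if and only if f is an affine function, i.e., f(x) = ⟨a,x⟩ + c for some a ∈ (ZMod 2)^n, c ∈ ZMod 2. -/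
/-!
If `f` avoids `000111`, repeating the odd entry of a zero-sum 4-tuple three times shows that `f`
takes an even number of ones on every zero-sum 4-tuple, i.e. `f (x + y + z) = f x + f y + f z`.
Then `x ↦ f x + f 0` is additive, hence a linear form. Conversely, for such `f` the sums of the
first and of the last three entries of a zero-sum 6-tuple coincide, yet `f` is `0` on one and `1`
on the other.
-/

open Finset

lemma ZMod.eq_of_ne_of_ne {a b c : ZMod 2} (hac : a ≠ c) (hbc : b ≠ c) : a = b := by
  revert a b c; decide

section Pattern

variable {V : Type*} [AddCommGroup V] {f : V → ZMod 2}

def HasPattern000111 (f : V → ZMod 2) : Prop :=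
  ∃ x : Fin 6 → V, ∑ i, x i = 0 ∧
    (∀ i : Fin 6, (i : ℕ) < 3 → f (x i) = 0) ∧ (∀ i : Fin 6, 3 ≤ (i : ℕ) → f (x i) = 1)

lemma hasPattern000111_of_apply {p q r s t u : V} (hsum : p + q + r + s + t + u = 0)
    (hp : f p = 0) (hq : f q = 0) (hr : f r = 0) (hs : f s = 1) (ht : f t = 1) (hu : f u = 1) :
    HasPattern000111 f := by
  refine ⟨![p, q, r, s, t, u], by simpa [Fin.sum_univ_six] using hsum, ?_, ?_⟩ <;>
    intro i hi <;> fin_cases i <;> simp_all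

variable [Module (ZMod 2) V]

lemma hasPattern000111_of_odd_one_out {a b c d : V} (hsum : a + b + c + d = 0)
    (hab : f a ≠ f b) (hbc : f b = f c) (hcd : f c = f d) : HasPattern000111 f := by
  have h3a : a + a + a = a := by rw [ZModModule.add_self, zero_add]
  rcases (by decide : ∀ v : ZMod 2, v = 0 ∨ v = 1) (f a) with ha | ha
  · have hb : f b = 1 := ZMod.eq_of_ne_of_ne (ha ▸ hab.symm) one_ne_zero
    exact hasPattern000111_of_apply (by rw [h3a, hsum]) ha ha ha hb (hbc ▸ hb) (hcd ▸ hbc ▸ hb)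
  · have hb : f b = 0 := ZMod.eq_of_ne_of_ne (ha ▸ hab.symm) zero_ne_one
    have hsum' : b + c + d + a + a + a = 0 := by
      rw [show b + c + d + a + a + a = a + a + a + b + c + d by abel, h3a, hsum]
    exact hasPattern000111_of_apply hsum' hb (hbc ▸ hb) (hcd ▸ hbc ▸ hb) ha ha ha

lemma apply_add_add_eq_of_apply_eq (hf : ¬HasPattern000111 f) {x y : V} (hxy : f x = f y)
    (z : V) : f (x + y + z) = f z := by
  by_contra hw
  have hsum : x + y + z + (x + y + z) = 0 := ZModModule.add_self _
  by_cases hxz : f x = f z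
  · exact hf <| hasPattern000111_of_odd_one_out (by rw [← hsum]; abel) (hxz ▸ hw) hxy
      (hxy ▸ hxz)
  · have hwx : f (x + y + z) = f x := ZMod.eq_of_ne_of_ne hw hxz
    exact hf <| hasPattern000111_of_odd_one_out (by rw [← hsum]; abel) (Ne.symm hxz) hxy
      (hxy ▸ hwx.symm)

lemma apply_add_add_of_not_hasPattern000111 (hf : ¬HasPattern000111 f) (x y z : V) :
    f (x + y + z) = f x + f y + f z := by
  rcases (by decide : ∀ a b c : ZMod 2, a = b ∨ b = c ∨ a = c) (f x) (f y) (f z)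
    with h | h | h
  · rw [apply_add_add_eq_of_apply_eq hf h, h, ZModModule.add_self, zero_add]
  · rw [show x + y + z = y + z + x by abel, apply_add_add_eq_of_apply_eq hf h, h, add_assoc,
      ZModModule.add_self, add_zero]
  · rw [show x + y + z = x + z + y by abel, apply_add_add_eq_of_apply_eq hf h, h,
      add_right_comm, ZModModule.add_self, zero_add]

lemma not_hasPattern000111_of_apply_add_add (h : ∀ x y z, f (x + y + z) = f x + f y + f z) :
    ¬HasPattern000111 f := by
  rintro ⟨x, hsum, h0, h1⟩
  rw [Fin.sum_univ_six, add_assoc _ (x 3), add_assoc _ (x 3 + x 4)] at hsum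
  have heq := congrArg f ((eq_neg_of_add_eq_zero_left hsum).trans (ZModModule.neg_eq_self _))
  rw [h, h, h0 0 (by decide), h0 1 (by decide), h0 2 (by decide), h1 3 (by decide),
    h1 4 (by decide), h1 5 (by decide)] at heq
  exact absurd heq (by decide)

theorem not_hasPattern000111_iff :
    ¬HasPattern000111 f ↔ ∀ x y z, f (x + y + z) = f x + f y + f z :=
  ⟨apply_add_add_of_not_hasPattern000111, not_hasPattern000111_of_apply_add_add⟩

end Pattern

lemma exists_addMonoidHom_of_apply_add_add {V : Type*} [AddCommGroup V] {f : V → ZMod 2}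
    (h : ∀ x y z, f (x + y + z) = f x + f y + f z) : ∃ g : V →+ ZMod 2, ∀ x, f x = g x + f 0 := by
  refine ⟨AddMonoidHom.mk' (fun x => f x + f 0) fun x y => ?_, fun x => ?_⟩
  · linear_combination (by simpa using h x y 0 : f (x + y) = f x + f y + f 0)
  · rw [AddMonoidHom.mk'_apply, add_assoc, ZModModule.add_self, add_zero]

lemma AddMonoidHom.exists_eq_sum_mul {ι : Type*} [Fintype ι] [DecidableEq ι] {m : ℕ}
    (g : (ι → ZMod m) →+ ZMod m) : ∃ a : ι → ZMod m, ∀ x, g x = ∑ j, a j * x j :=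
  ⟨fun j => g fun i => if j = i then 1 else 0, fun x => by
    simpa [mul_comm] using (g.toZModLinearMap m).pi_apply_eq_sum_univ x⟩

/-- `(C_6, 000111)`-freeness characterization: `f` avoids the ordered pattern
`000111` on zero-sum 6-tuples iff `f` is an affine function. -/
theorem c6_000111_free_iff_affine {n : ℕ} (f : (Fin n → ZMod 2) → ZMod 2) :
    (¬ ∃ x : Fin 6 → (Fin n → ZMod 2), ∑ i, x i = 0 ∧
        (∀ i : Fin 6, (i : ℕ) < 3 → f (x i) = 0) ∧
        (∀ i : Fin 6, 3 ≤ (i : ℕ) → f (x i) = 1)) ↔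
      ∃ (a : Fin n → ZMod 2) (c : ZMod 2), ∀ x, f x = (∑ j, a j * x j) + c := by
  change ¬HasPattern000111 f ↔ _
  rw [not_hasPattern000111_iff]
  constructor
  · intro h
    obtain ⟨g, hg⟩ := exists_addMonoidHom_of_apply_add_add h
    obtain ⟨a, ha⟩ := g.exists_eq_sum_mul
    exact ⟨a, f 0, fun x => by rw [hg, ha]⟩
  · rintro ⟨a, c, hf⟩ x y z
    simp only [hf, Pi.add_apply, mul_add, sum_add_distrib]
    linear_combination -ZModModule.add_self c
end

section
/- Let f : (ZMod 2)^n → ZMod 2 with f⁻¹(1) = {z : ⟨a_1,z⟩ = 1 ∨ ⟨a_2,z⟩ = 1} for linearly independent a_1, a_2 ∈ (ZMod 2)^n. Then f is not (C_5, 00111)-free: there exist x_1,...,x_5 with x_1+...+x_5 = 0, f(x_1)=f(x_2)=0, and f(x_3)=f(x_4)=f(x_5)=1. -/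
theorem exists_dotProduct_eq_of_linearIndependent {K m ι : Type*} [Field K] [Fintype m]
    [Fintype ι] {v : ι → m → K} (hv : LinearIndependent K v) (c : ι → K) :
    ∃ x : m → K, ∀ i, v i ⬝ᵥ x = c i := by
  have hrange : LinearMap.range (Matrix.of v).mulVecLin = ⊤ := by
    apply Submodule.eq_top_of_finrank_eq
    calc Module.finrank K (LinearMap.range (Matrix.of v).mulVecLin)
        = (Matrix.of v).rank := rfl
      _ = Module.finrank K (Submodule.span K (Set.range v)) :=
          (Matrix.of v).rank_eq_finrank_span_row
      _ = Module.finrank K (ι → K) := by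
          rw [finrank_span_eq_card hv, Module.finrank_fintype_fun_eq_card]
  obtain ⟨x, hx⟩ := LinearMap.range_eq_top.1 hrange c
  exact ⟨x, fun i => congrFun hx i⟩

theorem zmod_two_eq_zero_of_ne_one {b : ZMod 2} (h : b ≠ 1) : b = 0 := by
  revert b; decide

/-- A disjunction of two linearly independent linear functions is not
`(C_5, 00111)`-free. -/
theorem two_linear_disjunction_not_c5_free {n : ℕ}
    (f : (Fin n → ZMod 2) → ZMod 2)
    (a₁ a₂ : Fin n → ZMod 2) (hind : LinearIndependent (ZMod 2) ![a₁, a₂])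
    (hf : ∀ z, f z = 1 ↔ (∑ j, a₁ j * z j = 1 ∨ ∑ j, a₂ j * z j = 1)) :
    ∃ x₁ x₂ x₃ x₄ x₅ : Fin n → ZMod 2,
      x₁ + x₂ + x₃ + x₄ + x₅ = 0 ∧
      f x₁ = 0 ∧ f x₂ = 0 ∧ f x₃ = 1 ∧ f x₄ = 1 ∧ f x₅ = 1 := by
  obtain ⟨x, hx⟩ := exists_dotProduct_eq_of_linearIndependent hind ![1, 0]
  obtain ⟨y, hy⟩ := exists_dotProduct_eq_of_linearIndependent hind ![0, 1]
  have hx₁ : a₁ ⬝ᵥ x = 1 := hx 0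
  have hy₁ : a₁ ⬝ᵥ y = 0 := hy 0
  have hy₂ : a₂ ⬝ᵥ y = 1 := hy 1
  have hf₀ : f 0 = 0 := zmod_two_eq_zero_of_ne_one fun h => by simp [hf] at h
  refine ⟨0, 0, x, y, x + y, ?_, hf₀, hf₀, (hf x).2 (.inl hx₁), (hf y).2 (.inr hy₂),
    (hf _).2 (.inl ?_)⟩
  · rw [zero_add, zero_add]
    exact funext fun i => CharTwo.add_self_eq_zero ((x + y) i)
  · show a₁ ⬝ᵥ (x + y) = 1
    rw [dotProduct_add, hx₁, hy₁, add_zero]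
end
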